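/- Higher logarithmic derivatives of cyclotomic-unit power series give zeta values: let a, b be nonzero rational numbers, set S_c := exp(c·z/2) − exp(−c·z/2) in ℚ⟦z⟧ for c ∈ ℚ, and suppose G ∈ ℚ⟦z⟧ satisfies S_a′·S_b − S_a·S_b′ = G·S_a·S_b. Then for every even integer k ≥ 2, the value (k−1)! times the coefficient of z^{k−1} in G, regarded as a complex number, equals (b^k − a^k)·ζ(1−k), where ζ is the Riemann zeta function; equivalently, the (k−1)-st derivative at z = 0 of the logarithmic derivative of F = S_a/S_b equals (b^k − a^k)·ζ(1−k). -/

import Mathlib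

/-!
Since `S_c = exp(-c z/2) (exp(c z) - 1)`, the series `z S_c′ / S_c` equals `B(c z) + c z / 2`,
where `B(z) = z / (exp z - 1) = ∑ Bₙ zⁿ / n!`. Hence `z G = B(a z) - B(b z) + (a - b) z / 2`, so
for `k ≥ 2` the coefficient of `z^(k-1)` in `G` is `(aᵏ - bᵏ) Bₖ / k!`, and `ζ(1 - k) = -Bₖ / k`.
-/

open PowerSeries

/-- `S_c = exp(c·z/2) − exp(−c·z/2)` as a formal power series over `ℚ`. -/
noncomputable def Ssin (c : ℚ) : PowerSeries ℚ :=
  rescale (c / 2) (exp ℚ) - rescale (-(c / 2)) (exp ℚ)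

namespace PowerSeries

theorem derivative_rescale {R : Type*} [CommSemiring R] (c : R) (f : R⟦X⟧) :
    d⁄dX R (rescale c f) = C c * rescale c (d⁄dX R f) := by
  ext n
  simp only [coeff_derivative, coeff_C_mul, coeff_rescale, pow_succ]
  ring

theorem derivative_rescale_exp {A : Type*} [CommRing A] [Algebra ℚ A] (c : A) :
    d⁄dX A (rescale c (exp A)) = C c * rescale c (exp A) := by
  rw [derivative_rescale, derivative_exp]

theorem rescale_bernoulliPowerSeries_mul_exp_sub_one {A : Type*} [CommRing A] [Algebra ℚ A]
    (c : A) : rescale c (bernoulliPowerSeries A) * (rescale c (exp A) - 1) = C c * X := by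
  rw [← rescale_X, ← map_one (rescale c), ← map_sub, ← map_mul,
    bernoulliPowerSeries_mul_exp_sub_one]

end PowerSeries

theorem riemannZeta_one_sub_nat {k : ℕ} (hk : k ≠ 0) :
    riemannZeta (1 - k) = -bernoulli' k / k := by
  obtain ⟨n, rfl⟩ := Nat.exists_eq_succ_of_ne_zero hk
  rw [Nat.cast_succ, sub_add_cancel_right, riemannZeta_neg_nat_eq_bernoulli']

theorem Ssin_eq_mul (c : ℚ) :
    Ssin c = rescale (-(c / 2)) (exp ℚ) * (rescale c (exp ℚ) - 1) := by
  rw [Ssin, mul_sub, mul_one, exp_mul_exp_eq_exp_add, neg_add_eq_sub, sub_half]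

theorem derivative_Ssin (c : ℚ) :
    d⁄dX ℚ (Ssin c) = C (c / 2) * (rescale (c / 2) (exp ℚ) + rescale (-(c / 2)) (exp ℚ)) := by
  rw [Ssin, map_sub, derivative_rescale_exp, derivative_rescale_exp, map_neg]
  ring

theorem coeff_one_Ssin (c : ℚ) : coeff 1 (Ssin c) = c := by
  simp only [Ssin, map_sub, coeff_rescale, coeff_exp]
  norm_num

theorem Ssin_ne_zero {c : ℚ} (hc : c ≠ 0) : Ssin c ≠ 0 := fun h ↦
  hc (by rw [← coeff_one_Ssin c, h, map_zero])

/-- `X · S_c′ / S_c = B(c X) + c X / 2`, with `B(X) = X / (exp X - 1)` the Bernoulli series. -/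
noncomputable def xLogDerivSsin (c : ℚ) : ℚ⟦X⟧ :=
  rescale c (bernoulliPowerSeries ℚ) + C (c / 2) * X

theorem xLogDerivSsin_mul_Ssin (c : ℚ) : xLogDerivSsin c * Ssin c = X * d⁄dX ℚ (Ssin c) := by
  have hexp : rescale (-(c / 2)) (exp ℚ) * rescale c (exp ℚ) = rescale (c / 2) (exp ℚ) := by
    rw [exp_mul_exp_eq_exp_add, neg_add_eq_sub, sub_half]
  have hC : C c = C (c / 2) + C (c / 2) := by rw [← map_add, add_halves]
  rw [derivative_Ssin, xLogDerivSsin, Ssin_eq_mul]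
  linear_combination rescale (-(c / 2)) (exp ℚ) * rescale_bernoulliPowerSeries_mul_exp_sub_one c
    + C (c / 2) * X * hexp + X * rescale (-(c / 2)) (exp ℚ) * hC

theorem coeff_xLogDerivSsin (c : ℚ) {n : ℕ} (hn : n ≠ 1) :
    coeff n (xLogDerivSsin c) = c ^ n * bernoulli n / n.factorial := by
  simp only [xLogDerivSsin, bernoulliPowerSeries, map_add, coeff_rescale, coeff_mk, coeff_C_mul,
    coeff_X, hn, if_false, mul_zero, add_zero, Algebra.algebraMap_self, RingHom.id_apply]
  ring

theorem mul_X_eq_xLogDerivSsin_sub {a b : ℚ} (ha : a ≠ 0) (hb : b ≠ 0) {G : ℚ⟦X⟧}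
    (hG : d⁄dX ℚ (Ssin a) * Ssin b - Ssin a * d⁄dX ℚ (Ssin b) = G * Ssin a * Ssin b) :
    G * X = xLogDerivSsin a - xLogDerivSsin b := by
  apply mul_right_cancel₀ (mul_ne_zero (Ssin_ne_zero ha) (Ssin_ne_zero hb))
  linear_combination X * hG.symm - Ssin b * xLogDerivSsin_mul_Ssin a
    + Ssin a * xLogDerivSsin_mul_Ssin b

theorem factorial_mul_coeff_of_logDeriv {a b : ℚ} (ha : a ≠ 0) (hb : b ≠ 0) {G : ℚ⟦X⟧}
    (hG : d⁄dX ℚ (Ssin a) * Ssin b - Ssin a * d⁄dX ℚ (Ssin b) = G * Ssin a * Ssin b)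
    {n : ℕ} (hn : n ≠ 0) :
    n.factorial * coeff n G = (a ^ (n + 1) - b ^ (n + 1)) * bernoulli (n + 1) / (n + 1) := by
  have hn1 : n + 1 ≠ 1 := by omega
  rw [← coeff_succ_mul_X, mul_X_eq_xLogDerivSsin_sub ha hb hG, map_sub,
    coeff_xLogDerivSsin a hn1, coeff_xLogDerivSsin b hn1, Nat.factorial_succ]
  push_cast
  field_simp

/-- **Higher logarithmic derivatives of cyclotomic-unit power series give zeta values**:
if `G` is the logarithmic derivative of `F = S_a/S_b`, i.e.
`S_a′·S_b − S_a·S_b′ = G·S_a·S_b`, then for every even `k ≥ 2`, the number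
`(k−1)!` times the coefficient of `z^(k−1)` in `G` equals `(b^k − a^k)·ζ(1−k)`,
where `ζ` is the Riemann zeta function. -/
theorem log_deriv_coeff_eq_zeta_value (a b : ℚ) (ha : a ≠ 0) (hb : b ≠ 0)
    (G : PowerSeries ℚ)
    (hG : (d⁄dX ℚ) (Ssin a) * Ssin b - Ssin a * (d⁄dX ℚ) (Ssin b)
        = G * Ssin a * Ssin b) :
    ∀ k : ℕ, 2 ≤ k → Even k →
      (((k - 1).factorial : ℂ) * ((coeff (k - 1) G : ℚ) : ℂ))
        = ((b : ℂ) ^ k - (a : ℂ) ^ k) * riemannZeta (1 - (k : ℂ)) := by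
  intro k hk hk_even
  obtain ⟨n, rfl⟩ : ∃ n, k = n + 1 := ⟨k - 1, by omega⟩
  have hcoeff := congrArg (Rat.cast : ℚ → ℂ) (factorial_mul_coeff_of_logDeriv ha hb hG
    (n := n) (by omega))
  have hB : bernoulli' (n + 1) = bernoulli (n + 1) := by
    rw [bernoulli'_eq_bernoulli, hk_even.neg_one_pow, one_mul]
  rw [Nat.add_sub_cancel, riemannZeta_one_sub_nat n.succ_ne_zero, hB]
  push_cast at hcoeff ⊢
  rw [hcoeff]
  ring
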